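/- For every regular spanner P on a variable set X and every domination rule D on X that is itself a regular spanner, the skyline η_D P is a regular spanner (i.e., it is definable by a sequential variable-set automaton). -/

import Mathlib

namespace DocSpanners

/-- A span: a pair of endpoint positions `[i, j⟩`. -/
abbrev Span : Type := ℕ × ℕ

/-- `s` is a span of document `d`. -/
def IsSpanOf {α : Type} (d : List α) (s : Span) : Prop :=
  s.1 ≤ s.2 ∧ s.2 ≤ d.length

/-- A (schemaless) mapping over variable type `V`: a partial assignment of spans. -/
abbrev Mapping (V : Type) : Type := V → Option Span

/-- `m` is a mapping of document `d`. -/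
def MappingOf {α V : Type} (d : List α) (m : Mapping V) : Prop :=
  ∀ x s, m x = some s → IsSpanOf d s

/-- A spanner: maps documents to sets of mappings. -/
abbrev Spanner (α V : Type) : Type := List α → Set (Mapping V)

/-- Labels of a variable-set automaton: letters and variable markers. -/
inductive Label (α V : Type) : Type where
  | letter (a : α)
  | vopen (x : V)
  | vclose (x : V)
deriving DecidableEq

/-- The sequence of letters of a ref-word. -/
def letters {α V : Type} (w : List (Label α V)) : List α :=
  w.filterMap fun l => match l with
    | Label.letter a => some a
    | _ => none

/-- A ref-word is valid if for each variable, either its markers do not appear, or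
the opening and closing markers appear exactly once with the opening first. -/
def ValidRef {α V : Type} [DecidableEq α] [DecidableEq V] (w : List (Label α V)) : Prop :=
  ∀ x : V,
    (Label.vopen x ∉ w ∧ Label.vclose x ∉ w) ∨
    (w.count (Label.vopen x) = 1 ∧ w.count (Label.vclose x) = 1 ∧
      w.idxOf (Label.vopen x) < w.idxOf (Label.vclose x))

/-- The mapping defined by a (valid) ref-word: each marked variable is sent to the
span delimited by the positions at which its markers are read. -/
def refMapping {α V : Type} [DecidableEq α] [DecidableEq V] (w : List (Label α V)) :
    Mapping V := fun x =>
  if Label.vopen x ∈ w then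
    some ((letters (w.take (w.idxOf (Label.vopen x)))).length,
          (letters (w.take (w.idxOf (Label.vclose x)))).length)
  else none

/-- A variable-set automaton with state type `Q`. -/
structure VA (α V Q : Type) : Type where
  init : Q
  final : Set Q
  trans : Q → Label α V → Q → Prop

/-- Paths in a VA. -/
inductive VA.Path {α V Q : Type} (A : VA α V Q) : Q → List (Label α V) → Q → Prop where
  | nil (q : Q) : VA.Path A q [] q
  | cons {q q' q'' : Q} {l : Label α V} {w : List (Label α V)} :
      A.trans q l q' → VA.Path A q' w q'' → VA.Path A q (l :: w) q''

/-- The VA accepts the ref-word `w` (an accepting run reads `w`). -/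
def VA.AcceptsRef {α V Q : Type} (A : VA α V Q) (w : List (Label α V)) : Prop :=
  ∃ qf ∈ A.final, A.Path A.init w qf

/-- A VA is sequential if every accepting run is valid. -/
def VA.Sequential {α V Q : Type} [DecidableEq α] [DecidableEq V] (A : VA α V Q) : Prop :=
  ∀ w, A.AcceptsRef w → ValidRef w

/-- The spanner defined by a (sequential) VA. -/
def VA.spanner {α V Q : Type} [DecidableEq α] [DecidableEq V] (A : VA α V Q) :
    Spanner α V := fun d =>
  {m | ∃ w, A.AcceptsRef w ∧ letters w = d ∧ refMapping w = m}

/-- A spanner is regular if it is defined by some sequential VA with finitely many states. -/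
def IsRegular {α V : Type} [DecidableEq α] [DecidableEq V] (P : Spanner α V) : Prop :=
  ∃ (Q : Type) (_ : Fintype Q) (A : VA α V Q), A.Sequential ∧ A.spanner = P

/-- The skyline operator: keep only the mappings of `P d` that are maximal under `R d`. -/
def skyline {α V : Type} (P : Spanner α V)
    (R : List α → Mapping V → Mapping V → Prop) : Spanner α V := fun d =>
  {m | m ∈ P d ∧ ∀ m' ∈ P d, m' ≠ m → ¬ R d m m'}

/-- The variable inclusion domination relation: `m2` extends `m1`. -/
def varIncRel {V : Type} (m1 m2 : Mapping V) : Prop :=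
  ∀ x s, m1 x = some s → m2 x = some s

/-- Two mappings have the same domain. -/
def sameDom {V : Type} (m1 m2 : Mapping V) : Prop :=
  ∀ x, m1 x = none ↔ m2 x = none

/-- The span inclusion domination relation. -/
def spanIncRel {V : Type} (m1 m2 : Mapping V) : Prop :=
  sameDom m1 m2 ∧
    ∀ x s1 s2, m1 x = some s1 → m2 x = some s2 → s2.1 ≤ s1.1 ∧ s1.2 ≤ s2.2

/-- The left-to-right domination relation: same start, `m2` no shorter. -/
def ltrRel {V : Type} (m1 m2 : Mapping V) : Prop :=
  sameDom m1 m2 ∧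
    ∀ x s1 s2, m1 x = some s1 → m2 x = some s2 →
      s1.1 = s2.1 ∧ s1.2 - s1.1 ≤ s2.2 - s2.1

/-- The span length domination relation: `m2`'s spans are no shorter. -/
def spanLenRel {V : Type} (m1 m2 : Mapping V) : Prop :=
  sameDom m1 m2 ∧
    ∀ x s1 s2, m1 x = some s1 → m2 x = some s2 → s1.2 - s1.1 ≤ s2.2 - s2.1


/-- The pre-domination relation on a document `d` defined by a spanner `D` on
variables `V ⊕ V` (left = plain copies, right = annotated copies `x†`). -/
def ruleRel {α V : Type} (D : Spanner α (V ⊕ V)) (d : List α)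
    (m1 m2 : Mapping V) : Prop :=
  ∃ m ∈ D d, (∀ x, m (Sum.inl x) = m1 x) ∧ (∀ x, m (Sum.inr x) = m2 x)

/-- `D` is a domination rule: on every document, the relation it defines is a
partial order (reflexive on the mappings of the document, transitive, antisymmetric). -/
def IsDomRule {α V : Type} (D : Spanner α (V ⊕ V)) : Prop :=
  ∀ d : List α,
    (∀ m : Mapping V, MappingOf d m → ruleRel D d m m) ∧
    (∀ m1 m2 m3 : Mapping V, ruleRel D d m1 m2 → ruleRel D d m2 m3 → ruleRel D d m1 m3) ∧
    (∀ m1 m2 : Mapping V, ruleRel D d m1 m2 → ruleRel D d m2 m1 → m1 = m2)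

/-!
Let `A` and `B` be sequential VAs defining `P` and `D`. For a valid ref-word `w`, the mapping it
defines is determined by the stream of marker sets read between consecutive letters
(`markerBlocks`). Hence `refMapping w` is strictly dominated in `P` exactly when there are
ref-words `w'` accepted by `A` and `u` accepted by `B`, with the letters of `w`, such that each
marker set of `u` is the corresponding one of `w` tagged `Sum.inl` together with that of `w'`
tagged `Sum.inr`, and some marker set of `w'` differs from that of `w`. A finite automaton reading
`w` can guess `u` and `w'` block by block (`dominatedVA`); the skyline is then defined by the
product of `A` with the subset-construction complement of this automaton.
-/

section General

variable {X Y Z : Type}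

lemma Stream'.zip_cons_cons (f : X → Y → Z) (a : X) (b : Y) (s : Stream' X) (t : Stream' Y) :
    Stream'.zip f (Stream'.cons a s) (Stream'.cons b t) =
      Stream'.cons (f a b) (Stream'.zip f s t) := by
  rw [Stream'.zip_eq, Stream'.head_cons, Stream'.head_cons, Stream'.tail_cons, Stream'.tail_cons]

lemma Stream'.cons_eq_cons_iff {a b : X} {s t : Stream' X} :
    Stream'.cons a s = Stream'.cons b t ↔ a = b ∧ s = t :=
  Stream'.cons_injective2.eq_iff

lemma Stream'.set_eq_iff {s t : Stream' (Set X)} :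
    s = t ↔ ∀ i c, c ∈ s.get i ↔ c ∈ t.get i :=
  ⟨fun h => by simp [h], fun h => Stream'.ext fun i => Set.ext (h i)⟩

lemma Label.forall_iff {P : Label X Y → Prop} :
    (∀ c, P c) ↔ (∀ a, P (.letter a)) ∧ (∀ x, P (.vopen x)) ∧ (∀ x, P (.vclose x)) :=
  ⟨fun h => ⟨fun _ => h _, fun _ => h _, fun _ => h _⟩,
    fun ⟨hl, ho, hc⟩ c => by cases c <;> simp only [*]⟩

instance [Finite X] [Finite Y] : Finite (Label X Y) :=
  Finite.of_surjective (Sum.elim Label.letter (Sum.elim Label.vopen Label.vclose))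
    (by rintro (a | x | x)
        exacts [⟨.inl a, rfl⟩, ⟨.inr (.inl x), rfl⟩, ⟨.inr (.inr x), rfl⟩])

end General

section RefWords

variable {α V : Type}

@[simp] lemma letters_nil : letters ([] : List (Label α V)) = [] := rfl

@[simp] lemma letters_cons_letter (a : α) (w : List (Label α V)) :
    letters (Label.letter a :: w) = a :: letters w := rfl

@[simp] lemma letters_cons_vopen (x : V) (w : List (Label α V)) :
    letters (Label.vopen x :: w) = letters w := rfl

@[simp] lemma letters_cons_vclose (x : V) (w : List (Label α V)) :
    letters (Label.vclose x :: w) = letters w := rfl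

lemma letters_append (u v : List (Label α V)) :
    letters (u ++ v) = letters u ++ letters v :=
  List.filterMap_append

lemma letters_eq_cons_iff {w : List (Label α V)} {a : α} {r : List α} :
    letters w = a :: r ↔
      ∃ l w₀, letters l = [] ∧ letters w₀ = r ∧ w = l ++ Label.letter a :: w₀ := by
  constructor
  · intro h
    induction w with
    | nil => cases h
    | cons c w ih =>
      cases c with
      | letter b =>
        obtain ⟨rfl, rfl⟩ := List.cons.inj h
        exact ⟨[], w, rfl, rfl, rfl⟩
      | vopen x =>
        obtain ⟨l, w₀, hl, hw₀, rfl⟩ := ih h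
        exact ⟨Label.vopen x :: l, w₀, hl, hw₀, rfl⟩
      | vclose x =>
        obtain ⟨l, w₀, hl, hw₀, rfl⟩ := ih h
        exact ⟨Label.vclose x :: l, w₀, hl, hw₀, rfl⟩
  · rintro ⟨l, w₀, hl, rfl, rfl⟩
    simp [letters_append, hl]

variable [DecidableEq α] [DecidableEq V]

def refPos (w : List (Label α V)) (c : Label α V) : ℕ :=
  (letters (w.take (w.idxOf c))).length

lemma refMapping_apply (w : List (Label α V)) (x : V) :
    refMapping w x = if Label.vopen x ∈ w then
      some (refPos w (Label.vopen x), refPos w (Label.vclose x)) else none := rfl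

@[simp] lemma refPos_cons_self (c : Label α V) (w : List (Label α V)) :
    refPos (c :: w) c = 0 := by
  simp [refPos]

lemma refPos_cons_of_ne {l c : Label α V} (h : l ≠ c) (w : List (Label α V)) :
    refPos (l :: w) c = (letters [l]).length + refPos w c := by
  rw [refPos, List.idxOf_cons_ne _ h, List.take_succ_cons, ← List.singleton_append,
    letters_append, List.length_append, refPos]

lemma ValidRef.count_vopen_le_one {w : List (Label α V)} (hw : ValidRef w) (x : V) :
    w.count (Label.vopen x) ≤ 1 := by
  rcases hw x with ⟨h, -⟩ | ⟨h, -⟩ <;> simp [List.count_eq_zero.mpr, *]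

lemma ValidRef.count_vclose_le_one {w : List (Label α V)} (hw : ValidRef w) (x : V) :
    w.count (Label.vclose x) ≤ 1 := by
  rcases hw x with ⟨-, h⟩ | ⟨-, h, -⟩ <;> simp [List.count_eq_zero.mpr, *]

lemma ValidRef.vclose_mem_iff {w : List (Label α V)} (hw : ValidRef w) (x : V) :
    Label.vclose x ∈ w ↔ Label.vopen x ∈ w := by
  rcases hw x with ⟨h₁, h₂⟩ | ⟨h₁, h₂, -⟩
  · exact iff_of_false h₂ h₁
  · exact iff_of_true (List.count_pos_iff.mp (by omega)) (List.count_pos_iff.mp (by omega))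

end RefWords

namespace VA

variable {α V Q Q₁ Q₂ : Type}

def AcceptsFrom (A : VA α V Q) (q : Q) (w : List (Label α V)) : Prop :=
  ∃ qf ∈ A.final, A.Path q w qf

section AcceptsFrom

variable (A : VA α V Q)

@[simp] lemma acceptsFrom_nil {q : Q} : A.AcceptsFrom q [] ↔ q ∈ A.final :=
  ⟨fun ⟨_, hf, h⟩ => by cases h; exact hf, fun hq => ⟨q, hq, .nil q⟩⟩

lemma acceptsFrom_cons {q : Q} {l : Label α V} {w : List (Label α V)} :
    A.AcceptsFrom q (l :: w) ↔ ∃ q', A.trans q l q' ∧ A.AcceptsFrom q' w := by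
  constructor
  · rintro ⟨qf, hf, hp⟩
    cases hp with
    | cons ht hp => exact ⟨_, ht, qf, hf, hp⟩
  · rintro ⟨q', ht, qf, hf, hp⟩
    exact ⟨qf, hf, .cons ht hp⟩

lemma acceptsFrom_append {q : Q} {u v : List (Label α V)} :
    A.AcceptsFrom q (u ++ v) ↔ ∃ q', A.Path q u q' ∧ A.AcceptsFrom q' v := by
  induction u generalizing q with
  | nil =>
    refine ⟨fun h => ⟨q, .nil q, h⟩, ?_⟩
    rintro ⟨q', hp, h⟩
    cases hp
    exact h
  | cons l u ih =>
    rw [List.cons_append, acceptsFrom_cons]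
    constructor
    · rintro ⟨q₁, ht, h⟩
      obtain ⟨q', hp, h'⟩ := ih.mp h
      exact ⟨q', .cons ht hp, h'⟩
    · rintro ⟨q', hp, h'⟩
      cases hp with
      | cons ht hp => exact ⟨_, ht, ih.mpr ⟨q', hp, h'⟩⟩

end AcceptsFrom

def inter (A₁ : VA α V Q₁) (A₂ : VA α V Q₂) : VA α V (Q₁ × Q₂) where
  init := (A₁.init, A₂.init)
  final := A₁.final ×ˢ A₂.final
  trans s l s' := A₁.trans s.1 l s'.1 ∧ A₂.trans s.2 l s'.2

lemma acceptsFrom_inter {A₁ : VA α V Q₁} {A₂ : VA α V Q₂} {s : Q₁ × Q₂}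
    {w : List (Label α V)} :
    (A₁.inter A₂).AcceptsFrom s w ↔ A₁.AcceptsFrom s.1 w ∧ A₂.AcceptsFrom s.2 w := by
  induction w generalizing s with
  | nil => simp [inter]
  | cons l w ih =>
    simp only [acceptsFrom_cons, ih, Prod.exists]
    constructor
    · rintro ⟨q₁, q₂, ⟨ht₁, ht₂⟩, h₁, h₂⟩
      exact ⟨⟨q₁, ht₁, h₁⟩, ⟨q₂, ht₂, h₂⟩⟩
    · rintro ⟨⟨q₁, ht₁, h₁⟩, ⟨q₂, ht₂, h₂⟩⟩
      exact ⟨q₁, q₂, ⟨ht₁, ht₂⟩, h₁, h₂⟩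

def compl (A : VA α V Q) : VA α V (Set Q) where
  init := {A.init}
  final := {T | ∀ q ∈ T, q ∉ A.final}
  trans T l T' := T' = {q' | ∃ q ∈ T, A.trans q l q'}

lemma acceptsFrom_compl {A : VA α V Q} {T : Set Q} {w : List (Label α V)} :
    A.compl.AcceptsFrom T w ↔ ∀ q ∈ T, ¬ A.AcceptsFrom q w := by
  induction w generalizing T with
  | nil => simp [compl]
  | cons l w ih =>
    rw [acceptsFrom_cons]
    change (∃ T', T' = _ ∧ _) ↔ _
    rw [exists_eq_left, ih]
    simp only [acceptsFrom_cons, Set.mem_ofPred_eq, not_exists, not_and]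
    exact ⟨fun h q hq q' ht => h q' ⟨q, hq, ht⟩, fun h q' ⟨q, hq, ht⟩ => h q hq q' ht⟩

lemma acceptsRef_inter {A₁ : VA α V Q₁} {A₂ : VA α V Q₂} {w : List (Label α V)} :
    (A₁.inter A₂).AcceptsRef w ↔ A₁.AcceptsRef w ∧ A₂.AcceptsRef w :=
  acceptsFrom_inter

lemma acceptsRef_compl {A : VA α V Q} {w : List (Label α V)} :
    A.compl.AcceptsRef w ↔ ¬ A.AcceptsRef w := by
  change A.compl.AcceptsFrom {A.init} w ↔ ¬ A.AcceptsFrom A.init w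
  simp [acceptsFrom_compl]

end VA

section MarkerBlocks

variable {α V : Type}

/-- Entry `i` is the set of markers read between the `i`-th and the `(i+1)`-st letter,
enlarged by `S` for `i = 0`; entries past the last letter are empty. -/
def markerBlocks (S : Set (Label α V)) : List (Label α V) → Stream' (Set (Label α V))
  | [] => Stream'.cons S (Stream'.const ∅)
  | Label.letter _ :: w => Stream'.cons S (markerBlocks ∅ w)
  | Label.vopen x :: w => markerBlocks (insert (Label.vopen x) S) w
  | Label.vclose x :: w => markerBlocks (insert (Label.vclose x) S) w

lemma markerBlocks_append {l : List (Label α V)} (hl : letters l = [])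
    (S : Set (Label α V)) (w : List (Label α V)) :
    markerBlocks S (l ++ w) = markerBlocks (S ∪ {c | c ∈ l}) w := by
  induction l generalizing S with
  | nil => simp
  | cons c l ih =>
    cases c with
    | letter a => cases hl
    | vopen x | vclose x =>
      rw [List.cons_append, markerBlocks, ih hl]
      congr 1
      ext c
      simp only [Set.mem_union, Set.mem_insert_iff, Set.mem_ofPred_eq, List.mem_cons]
      tauto

lemma markerBlocks_of_letters_eq_nil {l : List (Label α V)} (hl : letters l = [])
    (S : Set (Label α V)) :
    markerBlocks S l = Stream'.cons (S ∪ {c | c ∈ l}) (Stream'.const ∅) := by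
  simpa [markerBlocks] using markerBlocks_append hl S []

lemma markerBlocks_append_letter {l : List (Label α V)} (hl : letters l = [])
    (S : Set (Label α V)) (a : α) (w : List (Label α V)) :
    markerBlocks S (l ++ Label.letter a :: w) =
      Stream'.cons (S ∪ {c | c ∈ l}) (markerBlocks ∅ w) := by
  rw [markerBlocks_append hl, markerBlocks]

lemma letter_notMem_markerBlocks {S : Set (Label α V)} (hS : ∀ a, Label.letter a ∉ S)
    (w : List (Label α V)) (a : α) (i : ℕ) : Label.letter a ∉ (markerBlocks S w).get i := by
  induction w generalizing S i with
  | nil => cases i <;> simp [markerBlocks, Stream'.get_zero_cons, Stream'.get_succ_cons, *]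
  | cons c w ih =>
    cases c with
    | letter b =>
      cases i
      · exact hS a
      · exact ih (fun _ => Set.notMem_empty _) _
    | vopen x | vclose x => exact ih (by simpa using hS) i

def pairBlock (S T : Set (Label α V)) : Set (Label α (V ⊕ V)) := fun c =>
  match c with
  | Label.letter _ => False
  | Label.vopen (Sum.inl x) => Label.vopen x ∈ S
  | Label.vopen (Sum.inr x) => Label.vopen x ∈ T
  | Label.vclose (Sum.inl x) => Label.vclose x ∈ S
  | Label.vclose (Sum.inr x) => Label.vclose x ∈ T

section pairBlock

variable {S T : Set (Label α V)} {x : V}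

@[simp] lemma letter_notMem_pairBlock (a : α) : Label.letter a ∉ pairBlock S T := id

@[simp] lemma vopen_inl_mem_pairBlock :
    Label.vopen (.inl x) ∈ pairBlock S T ↔ .vopen x ∈ S :=
  Iff.rfl

@[simp] lemma vopen_inr_mem_pairBlock :
    Label.vopen (.inr x) ∈ pairBlock S T ↔ .vopen x ∈ T :=
  Iff.rfl

@[simp] lemma vclose_inl_mem_pairBlock :
    Label.vclose (.inl x) ∈ pairBlock S T ↔ .vclose x ∈ S :=
  Iff.rfl

@[simp] lemma vclose_inr_mem_pairBlock :
    Label.vclose (.inr x) ∈ pairBlock S T ↔ .vclose x ∈ T :=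
  Iff.rfl

lemma pairBlock_empty : pairBlock (∅ : Set (Label α V)) ∅ = ∅ := by
  ext c
  rcases c with a | (x | x) | (x | x) <;> simp

end pairBlock

variable [DecidableEq α] [DecidableEq V]

lemma mem_markerBlocks_get {c : Label α V} (hc : ∀ a, c ≠ Label.letter a)
    {w : List (Label α V)} (hw : w.count c ≤ 1) (S : Set (Label α V)) (i : ℕ) :
    c ∈ (markerBlocks S w).get i ↔ (i = 0 ∧ c ∈ S) ∨ (c ∈ w ∧ refPos w c = i) := by
  induction w generalizing S i with
  | nil => cases i <;> simp [markerBlocks, Stream'.get_zero_cons, Stream'.get_succ_cons]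
  | cons l w ih =>
    have hw' := ih (List.count_le_count_cons.trans hw)
    by_cases hl : l = c
    · subst hl
      have hnot : l ∉ w := List.count_eq_zero.mp (by simpa using hw)
      cases l with
      | letter a => exact absurd rfl (hc a)
      | vopen x | vclose x => simp +contextual [markerBlocks, hw', hnot, eq_comm]
    · cases l with
      | letter a =>
        cases i <;> simp [markerBlocks, Stream'.get_zero_cons, Stream'.get_succ_cons,
          refPos_cons_of_ne hl, hw', Ne.symm hl, add_comm]
      | vopen x | vclose x =>
        simp [markerBlocks, hw', refPos_cons_of_ne hl, Ne.symm hl, and_comm]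

end MarkerBlocks

section Mappings

variable {α V V' : Type} [DecidableEq α] [DecidableEq V] [DecidableEq V']

lemma ValidRef.mem_markerBlocks_vopen {w : List (Label α V)} (hw : ValidRef w) (x : V)
    (i : ℕ) : Label.vopen x ∈ (markerBlocks ∅ w).get i ↔
      Label.vopen x ∈ w ∧ refPos w (Label.vopen x) = i := by
  simpa using mem_markerBlocks_get (by simp) (hw.count_vopen_le_one x) ∅ i

lemma ValidRef.mem_markerBlocks_vclose {w : List (Label α V)} (hw : ValidRef w) (x : V)
    (i : ℕ) : Label.vclose x ∈ (markerBlocks ∅ w).get i ↔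
      Label.vopen x ∈ w ∧ refPos w (Label.vclose x) = i := by
  simpa [hw.vclose_mem_iff] using mem_markerBlocks_get (by simp) (hw.count_vclose_le_one x) ∅ i

lemma refMapping_eq_iff {w : List (Label α V)} {u : List (Label α V')} (hw : ValidRef w)
    (hu : ValidRef u) (x : V) (y : V') :
    refMapping u y = refMapping w x ↔ ∀ i,
      (Label.vopen y ∈ (markerBlocks ∅ u).get i ↔
        Label.vopen x ∈ (markerBlocks ∅ w).get i) ∧
      (Label.vclose y ∈ (markerBlocks ∅ u).get i ↔
        Label.vclose x ∈ (markerBlocks ∅ w).get i) := by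
  simp only [hw.mem_markerBlocks_vopen, hw.mem_markerBlocks_vclose, hu.mem_markerBlocks_vopen,
    hu.mem_markerBlocks_vclose, refMapping_apply]
  have eq_iff_forall {a b : ℕ} : a = b ↔ ∀ i, (a = i ↔ b = i) :=
    ⟨fun h _ => by rw [h], fun h => (h _).2 rfl⟩
  by_cases hx : Label.vopen x ∈ w <;> by_cases hy : Label.vopen y ∈ u <;>
    simp only [hx, hy, if_true, if_false, Option.some.injEq, Prod.mk.injEq, reduceCtorEq,
      true_and, false_and, iff_false, false_iff, forall_and]
  · exact and_congr eq_iff_forall eq_iff_forall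
  · exact fun h => h.1 _ rfl
  · exact fun h => h.1 _ rfl
  · simp

lemma markerBlocks_eq_iff_refMapping_eq {w w' : List (Label α V)} (hw : ValidRef w)
    (hw' : ValidRef w') :
    markerBlocks ∅ w = markerBlocks ∅ w' ↔ refMapping w = refMapping w' := by
  simp only [Stream'.set_eq_iff, Label.forall_iff,
    letter_notMem_markerBlocks (S := ∅) (fun _ => Set.notMem_empty _), funext_iff,
    refMapping_eq_iff hw' hw, forall_and, implies_true, true_and]
  exact and_congr forall_comm forall_comm

lemma markerBlocks_eq_zip_iff {u : List (Label α (V ⊕ V))} {w w' : List (Label α V)}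
    (hu : ValidRef u) (hw : ValidRef w) (hw' : ValidRef w') :
    markerBlocks ∅ u = Stream'.zip pairBlock (markerBlocks ∅ w) (markerBlocks ∅ w') ↔
      (∀ x, refMapping u (.inl x) = refMapping w x) ∧
        (∀ x, refMapping u (.inr x) = refMapping w' x) := by
  simp only [Stream'.set_eq_iff, Stream'.get_zip, Label.forall_iff, Sum.forall,
    letter_notMem_markerBlocks (S := ∅) (fun _ => Set.notMem_empty _),
    letter_notMem_pairBlock, vopen_inl_mem_pairBlock, vopen_inr_mem_pairBlock,
    vclose_inl_mem_pairBlock, vclose_inr_mem_pairBlock, refMapping_eq_iff hw hu,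
    refMapping_eq_iff hw' hu, forall_and, implies_true, true_and, @forall_comm V ℕ]
  exact and_and_and_comm

end Mappings

section Domination

variable {α V QA QB : Type}

/-- Reading `w`, it guesses block by block an accepting run of `B` on some `u` and one of `A` on
some `w'`, both with the letters of `w`; `S` collects the markers of the current block of `w`,
and the flag records whether `w` and `w'` have differed in an earlier block. -/
def dominatedVA (B : VA α (V ⊕ V) QB) (A : VA α V QA) :
    VA α V (QB × QA × Set (Label α V) × Bool) where
  init := (B.init, A.init, ∅, false)
  final := fun (p, q, S, f) => ∃ lB l', letters lB = [] ∧ letters l' = [] ∧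
    B.AcceptsFrom p lB ∧ A.AcceptsFrom q l' ∧ {c | c ∈ lB} = pairBlock S {c | c ∈ l'} ∧
    (f = true ∨ S ≠ {c | c ∈ l'})
  trans := fun (p, q, S, f) l (p', q', S', f') => match l with
    | Label.letter a => ∃ lB l' p₁ q₁, letters lB = [] ∧ letters l' = [] ∧
        B.Path p lB p₁ ∧ B.trans p₁ (.letter a) p' ∧
        A.Path q l' q₁ ∧ A.trans q₁ (.letter a) q' ∧
        {c | c ∈ lB} = pairBlock S {c | c ∈ l'} ∧ S' = ∅ ∧
        (f' = true ↔ f = true ∨ S ≠ {c | c ∈ l'})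
    | c => p' = p ∧ q' = q ∧ S' = insert c S ∧ f' = f

variable (B : VA α (V ⊕ V) QB) (A : VA α V QA)

def DominatedFrom : QB × QA × Set (Label α V) × Bool → List (Label α V) → Prop
  | (p, q, S, f), w => ∃ u w', B.AcceptsFrom p u ∧ A.AcceptsFrom q w' ∧
      letters u = letters w ∧ letters w' = letters w ∧
      markerBlocks ∅ u = Stream'.zip pairBlock (markerBlocks S w) (markerBlocks ∅ w') ∧
      (f = true ∨ markerBlocks S w ≠ markerBlocks ∅ w')

lemma dominatedFrom_nil_iff {s : QB × QA × Set (Label α V) × Bool} :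
    DominatedFrom B A s [] ↔ s ∈ (dominatedVA B A).final := by
  obtain ⟨p, q, S, f⟩ := s
  have key {lB : List (Label α (V ⊕ V))} {l' : List (Label α V)} (hlB : letters lB = [])
      (hl' : letters l' = []) :
      (markerBlocks ∅ lB = Stream'.zip pairBlock (markerBlocks S []) (markerBlocks ∅ l') ↔
        {c | c ∈ lB} = pairBlock S {c | c ∈ l'}) ∧
      (markerBlocks S [] ≠ markerBlocks ∅ l' ↔ S ≠ {c | c ∈ l'}) := by
    have hzip : Stream'.zip pairBlock (Stream'.const ∅) (Stream'.const ∅) =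
        Stream'.const (∅ : Set (Label α (V ⊕ V))) := by
      rw [← pairBlock_empty]; rfl
    simp [markerBlocks, markerBlocks_of_letters_eq_nil, hlB, hl', Stream'.zip_cons_cons,
      Stream'.cons_eq_cons_iff, hzip]
  constructor
  · rintro ⟨lB, l', hB, hA, hlB, hl', hzip, hflag⟩
    exact ⟨lB, l', hlB, hl', hB, hA, (key hlB hl').1.1 hzip, by rwa [← (key hlB hl').2]⟩
  · rintro ⟨lB, l', hlB, hl', hB, hA, hset, hflag⟩
    exact ⟨lB, l', hB, hA, hlB, hl', (key hlB hl').1.2 hset, by rwa [(key hlB hl').2]⟩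

lemma dominatedFrom_letter_cons_iff {s : QB × QA × Set (Label α V) × Bool} {a : α}
    {w : List (Label α V)} :
    DominatedFrom B A s (.letter a :: w) ↔
      ∃ s', (dominatedVA B A).trans s (.letter a) s' ∧ DominatedFrom B A s' w := by
  obtain ⟨p, q, S, f⟩ := s
  simp only [DominatedFrom, markerBlocks, letters_cons_letter]
  constructor
  · rintro ⟨u, w', hBu, hAw', hlu, hlw', hzip, hflag⟩
    obtain ⟨lB, u, hlB, hlu₀, rfl⟩ := letters_eq_cons_iff.1 hlu
    obtain ⟨l', w', hl', hlw₀, rfl⟩ := letters_eq_cons_iff.1 hlw'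
    obtain ⟨p₁, hBp, hBu⟩ := B.acceptsFrom_append.1 hBu
    obtain ⟨p', hBt, hBu⟩ := B.acceptsFrom_cons.1 hBu
    obtain ⟨q₁, hAp, hAw'⟩ := A.acceptsFrom_append.1 hAw'
    obtain ⟨q', hAt, hAw'⟩ := A.acceptsFrom_cons.1 hAw'
    rw [markerBlocks_append_letter hlB, markerBlocks_append_letter hl', Stream'.zip_cons_cons,
      Set.empty_union, Set.empty_union, Stream'.cons_eq_cons_iff] at hzip
    rw [markerBlocks_append_letter hl', Set.empty_union, Ne, Stream'.cons_eq_cons_iff] at hflag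
    classical
    refine ⟨(p', q', ∅, decide (f = true ∨ S ≠ {c | c ∈ l'})),
      ⟨lB, l', p₁, q₁, hlB, hl', hBp, hBt, hAp, hAt, hzip.1, rfl, decide_eq_true_iff⟩,
      u, w', hBu, hAw', hlu₀, hlw₀, hzip.2, ?_⟩
    simp only [decide_eq_true_iff]
    tauto
  · rintro ⟨⟨p', q', S', f'⟩,
      ⟨lB, l', p₁, q₁, hlB, hl', hBp, hBt, hAp, hAt, hset, rfl, hf'⟩,
      u, w', hBu, hAw', hlu, hlw', hzip, hflag⟩
    refine ⟨lB ++ .letter a :: u, l' ++ .letter a :: w',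
      B.acceptsFrom_append.2 ⟨p₁, hBp, B.acceptsFrom_cons.2 ⟨p', hBt, hBu⟩⟩,
      A.acceptsFrom_append.2 ⟨q₁, hAp, A.acceptsFrom_cons.2 ⟨q', hAt, hAw'⟩⟩,
      by simp [letters_append, hlB, hlu], by simp [letters_append, hl', hlw'], ?_, ?_⟩
    · rw [markerBlocks_append_letter hlB, markerBlocks_append_letter hl',
        Stream'.zip_cons_cons, hzip, Set.empty_union, Set.empty_union, hset]
    · rw [markerBlocks_append_letter hl', Set.empty_union, Ne, Stream'.cons_eq_cons_iff]
      tauto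

lemma dominatedVA_acceptsFrom_iff {s : QB × QA × Set (Label α V) × Bool}
    {w : List (Label α V)} : (dominatedVA B A).AcceptsFrom s w ↔ DominatedFrom B A s w := by
  induction w generalizing s with
  | nil => rw [VA.acceptsFrom_nil, dominatedFrom_nil_iff]
  | cons l w ih =>
    rw [VA.acceptsFrom_cons]
    cases l with
    | letter a => simp only [ih, dominatedFrom_letter_cons_iff]
    | vopen x | vclose x =>
      obtain ⟨p, q, S, f⟩ := s
      constructor
      · rintro ⟨⟨p', q', S', f'⟩, ⟨rfl, rfl, rfl, rfl⟩, h⟩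
        exact ih.1 h
      · exact fun h => ⟨(p, q, insert _ S, f), ⟨rfl, rfl, rfl, rfl⟩, ih.2 h⟩

end Domination

section Skyline

variable {α V QA QB : Type} [DecidableEq α] [DecidableEq V] {B : VA α (V ⊕ V) QB}
  {A : VA α V QA}

lemma acceptsRef_dominatedVA_iff (hB : B.Sequential) (hA : A.Sequential)
    {w : List (Label α V)} (hw : ValidRef w) :
    (dominatedVA B A).AcceptsRef w ↔ ∃ m' ∈ A.spanner (letters w),
      m' ≠ refMapping w ∧ ruleRel B.spanner (letters w) (refMapping w) m' := by
  change (dominatedVA B A).AcceptsFrom (B.init, A.init, ∅, false) w ↔ _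
  rw [dominatedVA_acceptsFrom_iff]
  constructor
  · rintro ⟨u, w', hu, hw', hlu, hlw', hzip, hne⟩
    obtain ⟨hinl, hinr⟩ := (markerBlocks_eq_zip_iff (hB u hu) hw (hA w' hw')).1 hzip
    refine ⟨_, ⟨w', hw', hlw', rfl⟩, fun h => ?_, _, ⟨u, hu, hlu, rfl⟩, hinl, hinr⟩
    exact hne.resolve_left Bool.false_ne_true
      ((markerBlocks_eq_iff_refMapping_eq hw (hA w' hw')).2 h.symm)
  · rintro ⟨_, ⟨w', hw', hlw', rfl⟩, hne, _, ⟨u, hu, hlu, rfl⟩, hinl, hinr⟩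
    refine ⟨u, w', hu, hw', hlu, hlw',
      (markerBlocks_eq_zip_iff (hB u hu) hw (hA w' hw')).2 ⟨hinl, hinr⟩, Or.inr fun h => ?_⟩
    exact hne ((markerBlocks_eq_iff_refMapping_eq hw (hA w' hw')).1 h).symm

lemma spanner_inter_compl_dominatedVA (hB : B.Sequential) (hA : A.Sequential) :
    (A.inter (dominatedVA B A).compl).spanner = skyline A.spanner (ruleRel B.spanner) := by
  funext d
  ext m
  constructor
  · rintro ⟨w, hacc, rfl, rfl⟩
    obtain ⟨hAw, hdom⟩ := VA.acceptsRef_inter.1 hacc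
    rw [VA.acceptsRef_compl, acceptsRef_dominatedVA_iff hB hA (hA w hAw)] at hdom
    exact ⟨⟨w, hAw, rfl, rfl⟩, fun m' hm' hne hrel => hdom ⟨m', hm', hne, hrel⟩⟩
  · rintro ⟨⟨w, hAw, rfl, rfl⟩, hmax⟩
    refine ⟨w, VA.acceptsRef_inter.2 ⟨hAw, ?_⟩, rfl, rfl⟩
    rw [VA.acceptsRef_compl, acceptsRef_dominatedVA_iff hB hA (hA w hAw)]
    exact fun ⟨m', hm', hne, hrel⟩ => hmax m' hm' hne hrel

end Skyline

theorem skyline_of_regular_isRegular_general {α V : Type} [Fintype α] [DecidableEq α]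
    [Fintype V] [DecidableEq V]
    (P : Spanner α V) (hP : IsRegular P)
    (D : Spanner α (V ⊕ V)) (hD : IsRegular D) :
    IsRegular (skyline P (ruleRel D)) := by
  obtain ⟨QA, _, A, hA, rfl⟩ := hP
  obtain ⟨QB, _, B, hB, rfl⟩ := hD
  exact ⟨_, Fintype.ofFinite _, A.inter (dominatedVA B A).compl,
    fun w hw => hA w (VA.acceptsRef_inter.1 hw).1, spanner_inter_compl_dominatedVA hB hA⟩

/-- For every regular spanner `P` on a variable set and every domination
rule `D` that is itself a regular spanner, the skyline `η_D P` is a regular spanner. -/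
theorem skyline_of_regular_isRegular {α V : Type} [Fintype α] [DecidableEq α]
    [Fintype V] [DecidableEq V]
    (P : Spanner α V) (hP : IsRegular P)
    (D : Spanner α (V ⊕ V)) (hD : IsRegular D) (hDom : IsDomRule D) :
    IsRegular (skyline P (ruleRel D)) :=
  skyline_of_regular_isRegular_general P hP D hD

end DocSpanners
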